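/- arXiv:2605.01269 — 3 statements merged into one kernel-verified Lean document; each statement's English description precedes it below -/
import Mathlib

section
/- Let k ≥ 2 and n ≥ k be integers. If D is a digraph on n vertices containing no k-strongly connected subdigraph, then |A(D)| ≤ 2·C(n,2) − ((n−k+1)² − 1)/3. -/
/-- A finite strict digraph: a finite vertex set and a finite set of arcs
(ordered pairs), with no loops, and all arc endpoints in the vertex set. -/
structure Dgraph where
  verts : Finset ℕ
  arcs : Finset (ℕ × ℕ)
  arcs_mem : ∀ e ∈ arcs, e.1 ∈ verts ∧ e.2 ∈ verts
  no_loops : ∀ e ∈ arcs, e.1 ≠ e.2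

namespace Dgraph

/-- `H` is a subdigraph of `D`. -/
def IsSubdigraph (H D : Dgraph) : Prop := H.verts ⊆ D.verts ∧ H.arcs ⊆ D.arcs

/-- Reachability by a directed path. -/
def Reach (D : Dgraph) (u v : ℕ) : Prop :=
  Relation.ReflTransGen (fun a b => (a, b) ∈ D.arcs) u v

/-- `D` is strongly connected. -/
def StronglyConnected (D : Dgraph) : Prop :=
  ∀ u ∈ D.verts, ∀ v ∈ D.verts, D.Reach u v

/-- Deletion of a set of vertices. -/
def delete (D : Dgraph) (S : Finset ℕ) : Dgraph where
  verts := D.verts \ S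
  arcs := D.arcs.filter (fun e => e.1 ∉ S ∧ e.2 ∉ S)
  arcs_mem := by
    intro e he
    simp only [Finset.mem_filter] at he
    have h := D.arcs_mem e he.1
    simp only [Finset.mem_sdiff]
    exact ⟨⟨h.1, he.2.1⟩, ⟨h.2, he.2.2⟩⟩
  no_loops := fun e he => D.no_loops e (Finset.mem_filter.mp he).1

/-- The subdigraph induced by a set of vertices. -/
def induce (D : Dgraph) (S : Finset ℕ) : Dgraph where
  verts := D.verts ∩ S
  arcs := D.arcs.filter (fun e => e.1 ∈ S ∧ e.2 ∈ S)
  arcs_mem := by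
    intro e he
    simp only [Finset.mem_filter] at he
    have h := D.arcs_mem e he.1
    simp only [Finset.mem_inter]
    exact ⟨⟨h.1, he.2.1⟩, ⟨h.2, he.2.2⟩⟩
  no_loops := fun e he => D.no_loops e (Finset.mem_filter.mp he).1

/-- The complete digraph on a vertex set `S`. -/
def completeOn (S : Finset ℕ) : Dgraph where
  verts := S
  arcs := (S ×ˢ S).filter (fun e => e.1 ≠ e.2)
  arcs_mem := by
    intro e he
    simp only [Finset.mem_filter, Finset.mem_product] at he
    exact ⟨he.1.1, he.1.2⟩
  no_loops := fun e he => (Finset.mem_filter.mp he).2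

/-- Adding the arc `(u, v)` (when this is a legal new arc). -/
def addArc (D : Dgraph) (u v : ℕ) : Dgraph where
  verts := D.verts
  arcs := if u ∈ D.verts ∧ v ∈ D.verts ∧ u ≠ v then insert (u, v) D.arcs else D.arcs
  arcs_mem := by
    intro e he
    split at he
    · rcases Finset.mem_insert.mp he with h | h
      · subst h; exact ⟨by tauto, by tauto⟩
      · exact D.arcs_mem e h
    · exact D.arcs_mem e he
  no_loops := by
    intro e he
    split at he
    · rcases Finset.mem_insert.mp he with h | h
      · subst h; tauto
      · exact D.no_loops e h
    · exact D.no_loops e he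

/-- `D` is `k`-strongly connected: it has at least `k+1` vertices and removing
any fewer than `k` vertices leaves a strongly connected digraph. -/
def KStrong (D : Dgraph) (k : ℕ) : Prop :=
  k + 1 ≤ D.verts.card ∧
    ∀ S : Finset ℕ, S.card < k → StronglyConnected (D.delete S)

/-- `(u, v)` is an arc of the complement of `D`. -/
def MissingArc (D : Dgraph) (u v : ℕ) : Prop :=
  u ∈ D.verts ∧ v ∈ D.verts ∧ u ≠ v ∧ (u, v) ∉ D.arcs

/-- `D` is `𝒟ₖ`-saturated: it has no `k`-strongly connected subdigraph, but
adding any missing arc creates one. -/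
def DSaturated (D : Dgraph) (k : ℕ) : Prop :=
  (∀ H : Dgraph, H.IsSubdigraph D → ¬ H.KStrong k) ∧
    ∀ u v : ℕ, D.MissingArc u v →
      ∃ H : Dgraph, H.IsSubdigraph (D.addArc u v) ∧ H.KStrong k

/-- `S` is a separator of `D`. -/
def IsSeparator (D : Dgraph) (S : Finset ℕ) : Prop :=
  S ⊆ D.verts ∧
    (¬ StronglyConnected (D.delete S) ∨ (D.delete S).verts.card ≤ 1)

/-- `S` is a minimum separator of `D`. -/
def IsMinSeparator (D : Dgraph) (S : Finset ℕ) : Prop :=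
  D.IsSeparator S ∧ ∀ T : Finset ℕ, D.IsSeparator T → S.card ≤ T.card

/-- `B` is the vertex set of a strong component of `D`: a maximal set of
vertices inducing a strongly connected subdigraph. -/
def IsStrongComponent (D : Dgraph) (B : Finset ℕ) : Prop :=
  B ⊆ D.verts ∧ B.Nonempty ∧ StronglyConnected (D.induce B) ∧
    ∀ B' : Finset ℕ, B ⊆ B' → B' ⊆ D.verts →
      StronglyConnected (D.induce B') → B' = B

/-- The reciprocal-degree of `v` in `D`. -/
def recipDeg (D : Dgraph) (v : ℕ) : ℕ :=
  (D.verts.filter (fun w => (v, w) ∈ D.arcs ∧ (w, v) ∈ D.arcs)).card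

/-- Extend `D` by a new vertex `v`: bidirectional arcs to every vertex of `K`,
and unidirectional arcs (all out of `v` if `out`, else all into `v`) to every
other vertex of `D`. -/
def extend (D : Dgraph) (v : ℕ) (K : Finset ℕ) (out : Bool) : Dgraph where
  verts := insert v D.verts
  arcs := D.arcs
    ∪ ((K ∩ D.verts).filter (· ≠ v)).image (fun w => (w, v))
    ∪ ((K ∩ D.verts).filter (· ≠ v)).image (fun w => (v, w))
    ∪ (if out then ((D.verts \ K).filter (· ≠ v)).image (fun w => (v, w))
        else ((D.verts \ K).filter (· ≠ v)).image (fun w => (w, v)))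
  arcs_mem := by
    intro e he
    rcases Finset.mem_union.mp he with h | h
    · rcases Finset.mem_union.mp h with h | h
      · rcases Finset.mem_union.mp h with h | h
        · have h2 := D.arcs_mem e h
          exact ⟨Finset.mem_insert_of_mem h2.1, Finset.mem_insert_of_mem h2.2⟩
        · obtain ⟨w, hw, rfl⟩ := Finset.mem_image.mp h
          have hwD := (Finset.mem_inter.mp (Finset.mem_filter.mp hw).1).2
          exact ⟨Finset.mem_insert_of_mem hwD, Finset.mem_insert_self _ _⟩
      · obtain ⟨w, hw, rfl⟩ := Finset.mem_image.mp h
        have hwD := (Finset.mem_inter.mp (Finset.mem_filter.mp hw).1).2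
        exact ⟨Finset.mem_insert_self _ _, Finset.mem_insert_of_mem hwD⟩
    · cases out with
      | true =>
        simp only [if_true] at h
        obtain ⟨w, hw, rfl⟩ := Finset.mem_image.mp h
        have hwD := (Finset.mem_sdiff.mp (Finset.mem_filter.mp hw).1).1
        exact ⟨Finset.mem_insert_self _ _, Finset.mem_insert_of_mem hwD⟩
      | false =>
        simp only [Bool.false_eq_true, if_false] at h
        obtain ⟨w, hw, rfl⟩ := Finset.mem_image.mp h
        have hwD := (Finset.mem_sdiff.mp (Finset.mem_filter.mp hw).1).1
        exact ⟨Finset.mem_insert_of_mem hwD, Finset.mem_insert_self _ _⟩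
  no_loops := by
    intro e he
    rcases Finset.mem_union.mp he with h | h
    · rcases Finset.mem_union.mp h with h | h
      · rcases Finset.mem_union.mp h with h | h
        · exact D.no_loops e h
        · obtain ⟨w, hw, rfl⟩ := Finset.mem_image.mp h
          exact (Finset.mem_filter.mp hw).2
      · obtain ⟨w, hw, rfl⟩ := Finset.mem_image.mp h
        exact fun hvw => (Finset.mem_filter.mp hw).2 hvw.symm
    · cases out with
      | true =>
        simp only [if_true] at h
        obtain ⟨w, hw, rfl⟩ := Finset.mem_image.mp h
        exact fun hvw => (Finset.mem_filter.mp hw).2 hvw.symm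
      | false =>
        simp only [Bool.false_eq_true, if_false] at h
        obtain ⟨w, hw, rfl⟩ := Finset.mem_image.mp h
        exact (Finset.mem_filter.mp hw).2

/-- The recursively defined family of directed `m`-trees. -/
inductive IsDTree (m : ℕ) : Dgraph → Prop
  | base (S : Finset ℕ) (h : S.card = m) : IsDTree m (completeOn S)
  | grow (D : Dgraph) (hD : IsDTree m D) (v : ℕ) (hv : v ∉ D.verts)
      (K : Finset ℕ) (hK : K ⊆ D.verts) (hKcard : K.card = m)
      (hKcomplete : (completeOn K).IsSubdigraph D) (out : Bool) :
      IsDTree m (D.extend v K out)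

/-- `D` is a tournament: exactly one arc between any two distinct vertices. -/
def IsTournament (D : Dgraph) : Prop :=
  ∀ u ∈ D.verts, ∀ v ∈ D.verts, u ≠ v → ((u, v) ∈ D.arcs ↔ (v, u) ∉ D.arcs)

/-- `D` is acyclic: it has no directed cycle. -/
def Acyclic (D : Dgraph) : Prop :=
  ∀ v : ℕ, ¬ Relation.TransGen (fun a b => (a, b) ∈ D.arcs) v v

end Dgraph

open Dgraph

/-- The penalty function: `((m-k+1)^2 - 1)/3` when `m ≥ k`, else `0`. -/
private def pkQ (k m : ℕ) : ℚ := if k ≤ m then (((m : ℚ) - k + 1) ^ 2 - 1) / 3 else 0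

private lemma pkQ_pos {k m : ℕ} (h : k ≤ m) :
    pkQ k m = (((m : ℚ) - k + 1) ^ 2 - 1) / 3 := if_pos h

private lemma pkQ_neg {k m : ℕ} (h : ¬ k ≤ m) : pkQ k m = 0 := if_neg h

private lemma pkQ_nonneg (k m : ℕ) : 0 ≤ pkQ k m := by
  unfold pkQ
  split
  · rename_i h
    have hq : (k : ℚ) ≤ m := by exact_mod_cast h
    nlinarith [hq]
  · exact le_refl 0

private lemma pkQ_eq_zero_of_le {k m : ℕ} (h : m ≤ k) : pkQ k m = 0 := by
  unfold pkQ
  split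
  · rename_i h2
    have : m = k := le_antisymm h h2
    subst this
    ring
  · rfl

/-- The key numerical inequality. -/
private lemma pkQ_numeric (k x y t : ℕ) (hy : 1 ≤ y) (hyx : y ≤ x) (ht : t + 1 ≤ k) :
    pkQ k (x + y + t) ≤ pkQ k (x + t) + pkQ k y + (x : ℚ) * y := by
  have hyq : (1 : ℚ) ≤ (y : ℚ) := by exact_mod_cast hy
  have hyxq : (y : ℚ) ≤ (x : ℚ) := by exact_mod_cast hyx
  have htq : (t : ℚ) + 1 ≤ (k : ℚ) := by exact_mod_cast ht
  have hpy := pkQ_nonneg k y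
  by_cases hxt : k ≤ x + t
  · have hn : k ≤ x + y + t := by omega
    rw [pkQ_pos hn, pkQ_pos hxt]
    have hxtq : (k : ℚ) ≤ (x : ℚ) + t := by exact_mod_cast hxt
    push_cast
    nlinarith [mul_le_mul_of_nonneg_right hyxq (by linarith : (0:ℚ) ≤ (y:ℚ)),
      mul_le_mul_of_nonneg_right htq (by linarith : (0:ℚ) ≤ (y:ℚ))]
  · rw [pkQ_neg hxt]
    have hxtq : (x : ℚ) + t + 1 ≤ (k : ℚ) := by
      have : x + t + 1 ≤ k := by omega
      exact_mod_cast this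
    by_cases hn : k ≤ x + y + t
    · rw [pkQ_pos hn]
      have hnq : (k : ℚ) ≤ (x : ℚ) + y + t := by exact_mod_cast hn
      push_cast
      have hNy : (x : ℚ) + y + t - k + 1 ≤ (y : ℚ) := by linarith
      have hN1 : (1 : ℚ) ≤ (x : ℚ) + y + t - k + 1 := by linarith
      nlinarith [mul_le_mul hNy (hNy.trans hyxq) (by linarith) (by linarith)]
    · rw [pkQ_neg hn]
      nlinarith [hpy, hyq, hyxq]

private lemma arcs_subset_offDiag (D : Dgraph) : D.arcs ⊆ D.verts.offDiag := by
  intro e he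
  have h := D.arcs_mem e he
  exact Finset.mem_offDiag.mpr ⟨h.1, h.2, D.no_loops e he⟩

private lemma arcs_card_le_q (D : Dgraph) :
    (D.arcs.card : ℚ) ≤ (D.verts.card : ℚ) * ((D.verts.card : ℚ) - 1) := by
  have h1 : D.arcs.card ≤ D.verts.offDiag.card := Finset.card_le_card (arcs_subset_offDiag D)
  have h2 := Finset.offDiag_card D.verts
  have h3 : D.verts.card ≤ D.verts.card * D.verts.card := by nlinarith [D.verts.card]
  have h4 : (D.arcs.card : ℚ) ≤ ((D.verts.card * D.verts.card - D.verts.card : ℕ) : ℚ) := by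
    rw [← h2]; exact_mod_cast h1
  rw [Nat.cast_sub h3] at h4
  push_cast at h4
  linarith

private lemma count_cover (D : Dgraph) (X Y T : Finset ℕ)
    (hcov : ∀ w ∈ D.verts, w ∈ X ∨ w ∈ Y ∨ w ∈ T)
    (A4 : Finset (ℕ × ℕ))
    (hcross : ∀ p q, (p, q) ∈ D.arcs → ((p ∈ X ∧ q ∈ Y) ∨ (p ∈ Y ∧ q ∈ X)) → (p, q) ∈ A4) :
    D.arcs ⊆ (D.induce (X ∪ T)).arcs ∪ ((D.induce Y).arcs ∪ ((Y ×ˢ T) ∪ ((T ×ˢ Y) ∪ A4))) := by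
  intro e he
  obtain ⟨p, q⟩ := e
  have hpq := D.arcs_mem _ he
  have hc := hcross p q he
  simp only [Finset.mem_union, Dgraph.induce, Finset.mem_filter, Finset.mem_product] at *
  rcases hcov p hpq.1 with hp | hp | hp <;> rcases hcov q hpq.2 with hq | hq | hq <;> tauto

private lemma count_bound (D : Dgraph) (X Y T : Finset ℕ)
    (hcov : ∀ w ∈ D.verts, w ∈ X ∨ w ∈ Y ∨ w ∈ T)
    (A4 : Finset (ℕ × ℕ))
    (hcross : ∀ p q, (p, q) ∈ D.arcs → ((p ∈ X ∧ q ∈ Y) ∨ (p ∈ Y ∧ q ∈ X)) → (p, q) ∈ A4) :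
    D.arcs.card ≤ (D.induce (X ∪ T)).arcs.card + (D.induce Y).arcs.card
      + Y.card * T.card + T.card * Y.card + A4.card := by
  have h := Finset.card_le_card (count_cover D X Y T hcov A4 hcross)
  have u1 := Finset.card_union_le (D.induce (X ∪ T)).arcs
    ((D.induce Y).arcs ∪ ((Y ×ˢ T) ∪ ((T ×ˢ Y) ∪ A4)))
  have u2 := Finset.card_union_le (D.induce Y).arcs ((Y ×ˢ T) ∪ ((T ×ˢ Y) ∪ A4))
  have u3 := Finset.card_union_le (Y ×ˢ T) ((T ×ˢ Y) ∪ A4)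
  have u4 := Finset.card_union_le (T ×ˢ Y) A4
  have p1 := Finset.card_product Y T
  have p2 := Finset.card_product T Y
  omega

private lemma induce_subdigraph (D : Dgraph) (W : Finset ℕ) :
    (D.induce W).IsSubdigraph D :=
  ⟨Finset.inter_subset_left, Finset.filter_subset _ _⟩

private lemma induce_verts_of_subset (D : Dgraph) {W : Finset ℕ} (h : W ⊆ D.verts) :
    (D.induce W).verts = W := Finset.inter_eq_right.mpr h

/-- Main bound by strong induction on the number of vertices. -/
private lemma main_bound (k : ℕ) (hk : 2 ≤ k) :
    ∀ m : ℕ, ∀ D : Dgraph, D.verts.card = m →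
      (∀ H : Dgraph, H.IsSubdigraph D → ¬ H.KStrong k) →
      (D.arcs.card : ℚ) ≤ (m : ℚ) * ((m : ℚ) - 1) - pkQ k m := by
  intro m
  induction m using Nat.strong_induction_on with
  | _ m IH =>
    intro D hcard hfree
    by_cases hm : m ≤ k
    · rw [pkQ_eq_zero_of_le hm]
      have := arcs_card_le_q D
      rw [hcard] at this
      linarith
    · -- m ≥ k + 1 : D itself is not k-strong
      classical
      have hDn : ¬ D.KStrong k := hfree D ⟨Finset.Subset.refl _, Finset.Subset.refl _⟩
      have h1 : k + 1 ≤ D.verts.card := by rw [hcard]; omega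
      have h2 : ¬ ∀ S : Finset ℕ, S.card < k → StronglyConnected (D.delete S) :=
        fun h => hDn ⟨h1, h⟩
      push_neg at h2
      obtain ⟨S, hScard, hnsc⟩ := h2
      rw [Dgraph.StronglyConnected] at hnsc
      push_neg at hnsc
      obtain ⟨u, hu, v, hv, hnr⟩ := hnsc
      have hu' : u ∈ D.verts \ S := hu
      have hv' : v ∈ D.verts \ S := hv
      set B := (D.verts \ S).filter (fun w => (D.delete S).Reach u w) with hBdef
      set C := (D.verts \ S).filter (fun w => ¬ (D.delete S).Reach u w) with hCdef
      set T := D.verts ∩ S with hTdef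
      have huB : u ∈ B := Finset.mem_filter.mpr ⟨hu', Relation.ReflTransGen.refl⟩
      have hvC : v ∈ C := Finset.mem_filter.mpr ⟨hv', hnr⟩
      have hnoBC : ∀ p ∈ B, ∀ q ∈ C, (p, q) ∉ D.arcs := by
        intro p hp q hq harc
        rw [hBdef, Finset.mem_filter, Finset.mem_sdiff] at hp
        rw [hCdef, Finset.mem_filter, Finset.mem_sdiff] at hq
        have harc' : (p, q) ∈ (D.delete S).arcs := by
          simp only [Dgraph.delete, Finset.mem_filter]
          exact ⟨harc, hp.1.2, hq.1.2⟩
        exact hq.2 (Relation.ReflTransGen.tail hp.2 harc')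
      have hcov : ∀ w ∈ D.verts, w ∈ B ∨ w ∈ C ∨ w ∈ T := by
        intro w hw
        by_cases hwS : w ∈ S
        · exact Or.inr (Or.inr (Finset.mem_inter.mpr ⟨hw, hwS⟩))
        · by_cases hwP : (D.delete S).Reach u w
          · exact Or.inl (Finset.mem_filter.mpr ⟨Finset.mem_sdiff.mpr ⟨hw, hwS⟩, hwP⟩)
          · exact Or.inr (Or.inl (Finset.mem_filter.mpr ⟨Finset.mem_sdiff.mpr ⟨hw, hwS⟩, hwP⟩))
      have hBv : B ⊆ D.verts := fun w hw =>
        (Finset.mem_sdiff.mp (Finset.mem_filter.mp hw).1).1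
      have hCv : C ⊆ D.verts := fun w hw =>
        (Finset.mem_sdiff.mp (Finset.mem_filter.mp hw).1).1
      have hBS : ∀ w ∈ B, w ∉ S := fun w hw =>
        (Finset.mem_sdiff.mp (Finset.mem_filter.mp hw).1).2
      have hCS : ∀ w ∈ C, w ∉ S := fun w hw =>
        (Finset.mem_sdiff.mp (Finset.mem_filter.mp hw).1).2
      have hsum : B.card + C.card + T.card = m := by
        have e1 : B.card + C.card = (D.verts \ S).card :=
          Finset.card_filter_add_card_filter_not _
        have e2 : (D.verts \ S).card + (D.verts ∩ S).card = D.verts.card :=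
          Finset.card_sdiff_add_card_inter _ _
        rw [hTdef]
        omega
      have ht : T.card + 1 ≤ k := by
        have : T.card ≤ S.card := Finset.card_le_card Finset.inter_subset_right
        omega
      have hb1 : 1 ≤ B.card := Finset.card_pos.mpr ⟨u, huB⟩
      have hc1 : 1 ≤ C.card := Finset.card_pos.mpr ⟨v, hvC⟩
      -- generic finishing move given roles (X = big side, Y = small side)
      have finish : ∀ X Y : Finset ℕ, X ⊆ D.verts → Y ⊆ D.verts →
          (∀ w ∈ X, w ∉ S) → (∀ w ∈ Y, w ∉ S) →
          (∀ w ∈ D.verts, w ∈ X ∨ w ∈ Y ∨ w ∈ T) →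
          X.card + Y.card + T.card = m → 1 ≤ Y.card → Y.card ≤ X.card →
          (∀ p q, (p, q) ∈ D.arcs → ((p ∈ X ∧ q ∈ Y) ∨ (p ∈ Y ∧ q ∈ X)) → (p, q) ∈ C ×ˢ B) →
          C.card * B.card = X.card * Y.card →
          (D.arcs.card : ℚ) ≤ (m : ℚ) * ((m : ℚ) - 1) - pkQ k m := by
        intro X Y hXv hYv hXS hYS hcov' hsum' hy1 hyx hcross hA4
        have hTS : T ⊆ S := Finset.inter_subset_right
        have hdisjXT : Disjoint X T := by
          rw [Finset.disjoint_left]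
          intro a haX haT
          exact hXS a haX (hTS haT)
        have hWv : X ∪ T ⊆ D.verts :=
          Finset.union_subset hXv Finset.inter_subset_left
        have hWverts : (D.induce (X ∪ T)).verts = X ∪ T := induce_verts_of_subset D hWv
        have hWcard : (D.induce (X ∪ T)).verts.card = X.card + T.card := by
          rw [hWverts]; exact Finset.card_union_of_disjoint hdisjXT
        have hYverts : (D.induce Y).verts = Y := induce_verts_of_subset D hYv
        have hYcard : (D.induce Y).verts.card = Y.card := by rw [hYverts]
        have hfreeW : ∀ H : Dgraph, H.IsSubdigraph (D.induce (X ∪ T)) → ¬ H.KStrong k := by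
          intro H hH
          exact hfree H ⟨hH.1.trans (induce_subdigraph D _).1, hH.2.trans (induce_subdigraph D _).2⟩
        have hfreeY : ∀ H : Dgraph, H.IsSubdigraph (D.induce Y) → ¬ H.KStrong k := by
          intro H hH
          exact hfree H ⟨hH.1.trans (induce_subdigraph D _).1, hH.2.trans (induce_subdigraph D _).2⟩
        have hlt1 : X.card + T.card < m := by omega
        have hlt2 : Y.card < m := by omega
        have IH1 := IH (X.card + T.card) hlt1 (D.induce (X ∪ T)) hWcard hfreeW
        have IH2 := IH Y.card hlt2 (D.induce Y) hYcard hfreeY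
        have hcount := count_bound D X Y T hcov' (C ×ˢ B) hcross
        rw [Finset.card_product, hA4] at hcount
        have hcountq : (D.arcs.card : ℚ) ≤ ((D.induce (X ∪ T)).arcs.card : ℚ)
            + ((D.induce Y).arcs.card : ℚ) + (Y.card : ℚ) * T.card
            + (T.card : ℚ) * Y.card + (X.card : ℚ) * Y.card := by
          exact_mod_cast hcount
        have hnum := pkQ_numeric k X.card Y.card T.card hy1 hyx ht
        have hmq : (m : ℚ) = (X.card : ℚ) + Y.card + T.card := by
          rw [← hsum']; push_cast; ring
        have hxtq : ((X.card + T.card : ℕ) : ℚ) = (X.card : ℚ) + T.card := by push_cast; ring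
        have hpkn : pkQ k (X.card + Y.card + T.card) = pkQ k m := by rw [hsum']
        have hring : (m : ℚ) * ((m : ℚ) - 1) =
            ((X.card : ℚ) + T.card) * (((X.card : ℚ) + T.card) - 1)
            + (Y.card : ℚ) * ((Y.card : ℚ) - 1)
            + 2 * (Y.card : ℚ) * ((X.card : ℚ) + T.card) := by
          rw [hmq]; ring
        rw [hxtq] at IH1
        linarith [hcountq, IH1, IH2, hnum, hpkn.symm.le, hpkn.le]
      by_cases hbc : B.card ≤ C.card
      · -- X = C, Y = B
        refine finish C B hCv hBv hCS hBS ?_ (by omega) ?_ hbc ?_ rfl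
        · intro w hw; rcases hcov w hw with h | h | h
          · exact Or.inr (Or.inl h)
          · exact Or.inl h
          · exact Or.inr (Or.inr h)
        · omega
        · intro p q harc hor
          rcases hor with ⟨hp, hq⟩ | ⟨hp, hq⟩
          · exact Finset.mem_product.mpr ⟨hp, hq⟩
          · exact absurd harc (hnoBC p hp q hq)
      · -- X = B, Y = C
        refine finish B C hBv hCv hBS hCS hcov ?_ hc1 (by omega) ?_ (Nat.mul_comm _ _)
        · omega
        · intro p q harc hor
          rcases hor with ⟨hp, hq⟩ | ⟨hp, hq⟩
          · exact absurd harc (hnoBC p hp q hq)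
          · exact Finset.mem_product.mpr ⟨hp, hq⟩

/-- An `n`-vertex digraph with no `k`-strongly connected subdigraph has at most
`2·C(n,2) − ((n−k+1)² − 1)/3` arcs. -/
theorem stmt14 (k n : ℕ) (hk : 2 ≤ k) (hn : k ≤ n)
    (D : Dgraph) (hcard : D.verts.card = n)
    (hfree : ∀ H : Dgraph, H.IsSubdigraph D → ¬ H.KStrong k) :
    (D.arcs.card : ℚ) ≤
      2 * (n.choose 2 : ℚ) - (((n : ℚ) - k + 1) ^ 2 - 1) / 3 := by
  have hmain := main_bound k hk n D hcard hfree
  rw [pkQ_pos hn] at hmain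
  have hkey : 2 * n.choose 2 = n * (n - 1) := by
    cases n with
    | zero => rfl
    | succ m =>
      rw [Nat.choose_two_right, Nat.succ_sub_one]
      obtain ⟨c, hc⟩ := Nat.even_mul_succ_self m
      have h2 : (m + 1) * m = c + c := by rw [mul_comm]; exact hc
      omega
  have hkeyq : 2 * (n.choose 2 : ℚ) = (n : ℚ) * ((n : ℚ) - 1) := by
    have h1 : ((2 * n.choose 2 : ℕ) : ℚ) = ((n * (n - 1) : ℕ) : ℚ) := by exact_mod_cast hkey
    have hn1 : 1 ≤ n := by omega
    rw [Nat.cast_mul, Nat.cast_mul, Nat.cast_sub hn1] at h1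
    push_cast at h1 ⊢
    linarith
  linarith
end

section
/- Let k ≥ 2 and n ≥ 3(k−1) be integers. If D is a digraph on n vertices containing no k-strongly connected subdigraph, then |A(D)| ≤ C(n−k+1, 2) + (17/6)(k−1)(n−k+1). In particular, the extremal number ex(n, Dₖ) is at most C(n−k+1, 2) + (17/6)(k−1)(n−k+1). -/
open Dgraph
open Dgraph Finset

namespace Stmt15Aux
set_option maxHeartbeats 1000000

/-- The certificate function. -/
noncomputable def Fq (k m : ℕ) : ℚ :=
  if m ≤ k then (m : ℚ) * ((m : ℚ) - 1)
  else if m + 4 ≤ 3 * k then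
    (m : ℚ) * ((m : ℚ) - 1) / 2 + ((k : ℚ) ^ 2 + (k : ℚ) - 2) / 2
      + ((k : ℚ) - 5 / 6) * ((m : ℚ) - (k : ℚ) - 1) + ((m : ℚ) - (k : ℚ) - 1) ^ 2 / 6
  else ((m : ℚ) - (k : ℚ) + 1) * ((m : ℚ) - (k : ℚ)) / 2
      + 17 / 6 * ((k : ℚ) - 1) * ((m : ℚ) - (k : ℚ) + 1)

lemma Fq_base {k m : ℕ} (h : m ≤ k) : Fq k m = (m : ℚ) * ((m : ℚ) - 1) := by
  simp [Fq, h]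

lemma Fq_mid {k m : ℕ} (h1 : k < m) (h2 : m + 4 ≤ 3 * k) :
    Fq k m = (m : ℚ) * ((m : ℚ) - 1) / 2 + ((k : ℚ) ^ 2 + (k : ℚ) - 2) / 2
      + ((k : ℚ) - 5 / 6) * ((m : ℚ) - (k : ℚ) - 1) + ((m : ℚ) - (k : ℚ) - 1) ^ 2 / 6 := by
  rw [Fq, if_neg (by omega), if_pos h2]

lemma Fq_top {k m : ℕ} (h1 : k < m) (h2 : 3 * k < m + 4) :
    Fq k m = ((m : ℚ) - (k : ℚ) + 1) * ((m : ℚ) - (k : ℚ)) / 2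
      + 17 / 6 * ((k : ℚ) - 1) * ((m : ℚ) - (k : ℚ) + 1) := by
  rw [Fq, if_neg (by omega), if_neg (by omega)]

/-- Splitting inequality, overlap version (both parts "top"). -/
lemma split_o3 (k a b s : ℕ) (hk : 2 ≤ k) (ha : 1 ≤ a) (hb : 1 ≤ b) (hs : s < k)
    (h3a : 3 * k ≤ a + s + 3) (h3b : 3 * k ≤ b + s + 3) :
    Fq k (a + s) + Fq k (b + s) + (a : ℚ) * b ≤ Fq k (a + b + s) := by
  have hKq : (2 : ℚ) ≤ (k : ℚ) := by exact_mod_cast hk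
  have hAq : (1 : ℚ) ≤ (a : ℚ) := by exact_mod_cast ha
  have hBq : (1 : ℚ) ≤ (b : ℚ) := by exact_mod_cast hb
  have hSq0 : (0 : ℚ) ≤ (s : ℚ) := by positivity
  have hSq1 : (s : ℚ) ≤ (k : ℚ) - 1 := by
    have : (s : ℚ) + 1 ≤ (k : ℚ) := by exact_mod_cast hs
    linarith
  have h3aq : 3 * (k : ℚ) - 3 ≤ (a : ℚ) + s := by
    have : (3 * k : ℚ) ≤ ((a : ℚ) + s) + 3 := by exact_mod_cast h3a
    push_cast at this ⊢; linarith
  have h3bq : 3 * (k : ℚ) - 3 ≤ (b : ℚ) + s := by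
    have : (3 * k : ℚ) ≤ ((b : ℚ) + s) + 3 := by exact_mod_cast h3b
    push_cast at this ⊢; linarith
  rw [Fq_top (by omega) (by omega), Fq_top (by omega) (by omega), Fq_top (by omega) (by omega)]
  push_cast
  nlinarith [mul_nonneg hSq0 (sub_nonneg.2 hSq1), sq_nonneg ((k : ℚ) - 1 - s),
    mul_nonneg (sub_nonneg.2 hKq) hSq0]

/-- Splitting inequality, `a` the small side left alone (not both parts top). -/
lemma split_o2 (k a b s : ℕ) (hk : 2 ≤ k) (ha : 1 ≤ a) (hab : a ≤ b) (hs : s < k)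
    (hm : k + 1 ≤ a + b + s) (hnt : a + s + 3 < 3 * k) :
    Fq k a + Fq k (b + s) + 2 * (a : ℚ) * s + (a : ℚ) * b ≤ Fq k (a + b + s) := by
  have hKq : (2 : ℚ) ≤ (k : ℚ) := by exact_mod_cast hk
  have hAq : (1 : ℚ) ≤ (a : ℚ) := by exact_mod_cast ha
  have hSq0 : (0 : ℚ) ≤ (s : ℚ) := by positivity
  have hSq1 : (s : ℚ) ≤ (k : ℚ) - 1 := by
    have : (s : ℚ) + 1 ≤ (k : ℚ) := by exact_mod_cast hs
    linarith
  have hXq : (a : ℚ) + s ≤ (b : ℚ) + s := by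
    have : (a : ℚ) ≤ (b : ℚ) := by exact_mod_cast hab
    linarith
  -- regions
  rcases le_or_gt a k with hra | hra
  · have hraq : (a : ℚ) ≤ (k : ℚ) := by exact_mod_cast hra
    rcases le_or_gt (b + s) k with hrx | hrx
    · -- x base
      have hrxq : (b : ℚ) + s ≤ (k : ℚ) := by exact_mod_cast hrx
      have hm1q : (k : ℚ) + 1 ≤ (a : ℚ) + b + s := by exact_mod_cast hm
      rcases le_or_gt (a + b + s + 4) (3 * k) with hrm | hrm
      · have hrmq : (a : ℚ) + b + s + 4 ≤ 3 * k := by exact_mod_cast hrm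
        rw [Fq_base hra, Fq_base hrx, Fq_mid (by omega) (by omega)]
        push_cast
        nlinarith [mul_nonneg (sub_nonneg.2 hAq) hSq0, sq_nonneg ((a : ℚ) + b + s - k - 1),
          mul_nonneg (sub_nonneg.2 hraq) (sub_nonneg.2 hrxq)]
      · have hrmq : (3 : ℚ) * k < (a : ℚ) + b + s + 4 := by exact_mod_cast hrm
        rw [Fq_base hra, Fq_base hrx, Fq_top (by omega) (by omega)]
        push_cast
        nlinarith [mul_nonneg (sub_nonneg.2 hAq) hSq0,
          mul_nonneg (sub_nonneg.2 hraq) (sub_nonneg.2 hrxq), sq_nonneg ((k : ℚ) - 2)]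
    · rcases le_or_gt (b + s + 4) (3 * k) with hrx2 | hrx2
      · -- x mid
        have hrx1q : (k : ℚ) + 1 ≤ (b : ℚ) + s := by exact_mod_cast hrx
        have hrx2q : (b : ℚ) + s + 4 ≤ 3 * k := by exact_mod_cast hrx2
        rcases le_or_gt (a + b + s + 4) (3 * k) with hrm | hrm
        · have hrmq : (a : ℚ) + b + s + 4 ≤ 3 * k := by exact_mod_cast hrm
          rw [Fq_base hra, Fq_mid (by omega) (by omega), Fq_mid (by omega) (by omega)]
          push_cast
          nlinarith [mul_nonneg (sub_nonneg.2 hAq) hSq0,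
            mul_nonneg (sub_nonneg.2 hAq) (sub_nonneg.2 hraq),
            mul_nonneg (sub_nonneg.2 hrx1q) (sub_nonneg.2 hSq1)]
        · have hrmq : (3 : ℚ) * k < (a : ℚ) + b + s + 4 := by exact_mod_cast hrm
          rw [Fq_base hra, Fq_mid (by omega) (by omega), Fq_top (by omega) (by omega)]
          push_cast
          nlinarith [mul_nonneg (sub_nonneg.2 hAq) hSq0,
            mul_nonneg (sub_nonneg.2 hAq) (sub_nonneg.2 hraq),
            sq_nonneg ((b : ℚ) + s - (3 * k - 4)),
            mul_nonneg (sub_nonneg.2 hrx1q) (sub_nonneg.2 hSq1)]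
      · -- x top, m top
        have hrxq : 3 * (k : ℚ) - 3 ≤ (b : ℚ) + s := by
          have h' : 3 * k ≤ b + s + 3 := by omega
          have : (3 * (k:ℚ)) ≤ ((b : ℚ) + s) + 3 := by exact_mod_cast h'
          linarith
        rw [Fq_base hra, Fq_top (by omega) (by omega), Fq_top (by omega) (by omega)]
        push_cast
        nlinarith [mul_nonneg (sub_nonneg.2 hAq) hSq0,
          mul_nonneg (sub_nonneg.2 hraq) (sub_nonneg.2 hSq1)]
  · -- a mid
    have hra1q : (k : ℚ) + 1 ≤ (a : ℚ) := by exact_mod_cast hra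
    have hra2q : (a : ℚ) + s ≤ 3 * k - 4 := by
      have h' : a + s + 4 ≤ 3 * k := by omega
      have : ((a : ℚ) + s) + 4 ≤ 3 * k := by exact_mod_cast h'
      linarith
    have hxk : k < b + s := by omega
    rcases le_or_gt (b + s + 4) (3 * k) with hrx2 | hrx2
    · -- x mid
      have hrx1q : (k : ℚ) + 1 ≤ (b : ℚ) + s := by exact_mod_cast hxk
      have hrx2q : (b : ℚ) + s + 4 ≤ 3 * k := by exact_mod_cast hrx2
      rcases le_or_gt (a + b + s + 4) (3 * k) with hrm | hrm
      · have hrmq : (a : ℚ) + b + s + 4 ≤ 3 * k := by exact_mod_cast hrm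
        rw [Fq_mid (by omega) (by omega), Fq_mid (by omega) (by omega),
          Fq_mid (by omega) (by omega)]
        push_cast
        nlinarith [mul_nonneg (sub_nonneg.2 hra1q) hSq0,
          mul_nonneg (sub_nonneg.2 hrx1q) (sub_nonneg.2 hSq1)]
      · have hrmq : (3 : ℚ) * k < (a : ℚ) + b + s + 4 := by exact_mod_cast hrm
        rw [Fq_mid (by omega) (by omega), Fq_mid (by omega) (by omega),
          Fq_top (by omega) (by omega)]
        push_cast
        nlinarith [mul_nonneg (sub_nonneg.2 hra1q) hSq0,
          mul_nonneg (sub_nonneg.2 hrx1q) (sub_nonneg.2 hSq1),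
          sq_nonneg ((a : ℚ) + b + s - 3 * k + 3)]
    · -- x top
      have hrxq : 3 * (k : ℚ) - 3 ≤ (b : ℚ) + s := by
        have h' : 3 * k ≤ b + s + 3 := by omega
        have : (3 * (k:ℚ)) ≤ ((b : ℚ) + s) + 3 := by exact_mod_cast h'
        linarith
      rw [Fq_mid (by omega) (by omega), Fq_top (by omega) (by omega),
        Fq_top (by omega) (by omega)]
      push_cast
      nlinarith [mul_nonneg (sub_nonneg.2 hra1q) hSq0,
        mul_nonneg (sub_nonneg.2 hra1q) (sub_nonneg.2 hra2q),
        mul_nonneg (sub_nonneg.2 hra1q) (sub_nonneg.2 hSq1)]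

end Stmt15Aux
namespace Stmt15Aux
set_option maxHeartbeats 1600000

lemma sub_trans {H D E : Dgraph} (h1 : H.IsSubdigraph D) (h2 : D.IsSubdigraph E) :
    H.IsSubdigraph E := ⟨h1.1.trans h2.1, h1.2.trans h2.2⟩

lemma induce_sub (D : Dgraph) (T : Finset ℕ) : (D.induce T).IsSubdigraph D :=
  ⟨Finset.inter_subset_left, Finset.filter_subset _ _⟩

lemma induce_card {D : Dgraph} {T : Finset ℕ} (h : T ⊆ D.verts) :
    (D.induce T).verts.card = T.card := by
  have : D.verts ∩ T = T := Finset.inter_eq_right.mpr h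
  simp [Dgraph.induce, this]

lemma card_cover (D : Dgraph) (P Q : Finset ℕ) (E1 E2 : Finset (ℕ × ℕ))
    (h : ∀ e ∈ D.arcs, (e.1 ∈ P ∧ e.2 ∈ P) ∨ (e.1 ∈ Q ∧ e.2 ∈ Q) ∨ e ∈ E1 ∨ e ∈ E2) :
    D.arcs.card ≤ (D.induce P).arcs.card + (D.induce Q).arcs.card + (E1.card + E2.card) := by
  have hsub : D.arcs ⊆ ((D.induce P).arcs ∪ (D.induce Q).arcs ∪ E1 ∪ E2) := by
    intro e he
    simp only [Finset.mem_union]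
    rcases h e he with h1 | h2 | h3 | h4
    · exact Or.inl (Or.inl (Or.inl (Finset.mem_filter.mpr ⟨he, h1⟩)))
    · exact Or.inl (Or.inl (Or.inr (Finset.mem_filter.mpr ⟨he, h2⟩)))
    · exact Or.inl (Or.inr h3)
    · exact Or.inr h4
  have h0 := Finset.card_le_card hsub
  have h4 : ((D.induce P).arcs ∪ (D.induce Q).arcs ∪ E1 ∪ E2).card
      ≤ (D.induce P).arcs.card + (D.induce Q).arcs.card + E1.card + E2.card := by
    calc ((D.induce P).arcs ∪ (D.induce Q).arcs ∪ E1 ∪ E2).card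
        ≤ ((D.induce P).arcs ∪ (D.induce Q).arcs ∪ E1).card + E2.card :=
          Finset.card_union_le _ _
      _ ≤ (((D.induce P).arcs ∪ (D.induce Q).arcs).card + E1.card) + E2.card :=
          by have := Finset.card_union_le ((D.induce P).arcs ∪ (D.induce Q).arcs) E1; omega
      _ ≤ (((D.induce P).arcs.card + (D.induce Q).arcs.card) + E1.card) + E2.card :=
          by have := Finset.card_union_le (D.induce P).arcs (D.induce Q).arcs; omega
  omega

lemma arcs_le_offdiag (D : Dgraph) :
    D.arcs.card + D.verts.card ≤ D.verts.card * D.verts.card := by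
  classical
  have hdsub : D.verts.image (fun v => (v, v)) ⊆ D.verts ×ˢ D.verts := by
    intro e he
    simp only [Finset.mem_image] at he
    obtain ⟨w, hw, rfl⟩ := he
    exact Finset.mem_product.mpr ⟨hw, hw⟩
  have hsub : D.arcs ⊆ (D.verts ×ˢ D.verts) \ D.verts.image (fun v => (v, v)) := by
    intro e he
    obtain ⟨h1, h2⟩ := D.arcs_mem e he
    have h3 := D.no_loops e he
    refine Finset.mem_sdiff.mpr ⟨Finset.mem_product.mpr ⟨h1, h2⟩, ?_⟩
    simp only [Finset.mem_image]
    rintro ⟨w, hw, rfl⟩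
    exact h3 rfl
  have h1 := Finset.card_le_card hsub
  rw [Finset.card_sdiff_of_subset hdsub, Finset.card_product,
    Finset.card_image_of_injective _ (fun x y hxy => (Prod.ext_iff.mp hxy).1)] at h1
  have h2 : D.verts.card ≤ D.verts.card * D.verts.card := by
    rcases Nat.eq_zero_or_pos D.verts.card with h | h
    · simp [h]
    · exact Nat.le_mul_of_pos_left _ h
  omega

lemma main_bound (k : ℕ) (hk : 2 ≤ k) :
    ∀ m : ℕ, ∀ D : Dgraph, D.verts.card = m →
      (∀ H : Dgraph, H.IsSubdigraph D → ¬ H.KStrong k) →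
      (D.arcs.card : ℚ) ≤ Fq k m := by
  intro m
  induction m using Nat.strong_induction_on with
  | _ m ih =>
  intro D hDcard hfree
  classical
  by_cases hmk : m ≤ k
  · rw [Fq_base hmk]
    have h1 := arcs_le_offdiag D
    rw [hDcard] at h1
    have h2 : (D.arcs.card : ℚ) + m ≤ (m : ℚ) * m := by exact_mod_cast h1
    linarith
  · push_neg at hmk
    have hD := hfree D ⟨Finset.Subset.refl _, Finset.Subset.refl _⟩
    rw [Dgraph.KStrong] at hD
    push_neg at hD
    obtain ⟨S, hScard, hSnc⟩ := hD (by omega : k + 1 ≤ D.verts.card)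
    rw [Dgraph.StronglyConnected] at hSnc
    push_neg at hSnc
    obtain ⟨u, hu, v, hv, huv⟩ := hSnc
    have hu' : u ∈ D.verts \ S := hu
    have hv' : v ∈ D.verts \ S := hv
    obtain ⟨Bs, hBsdef⟩ : ∃ X : Finset ℕ,
        X = (D.verts \ S).filter (fun w => (D.delete S).Reach u w) := ⟨_, rfl⟩
    obtain ⟨As, hAsdef⟩ : ∃ X : Finset ℕ, X = (D.verts \ S) \ Bs := ⟨_, rfl⟩
    obtain ⟨Ss, hSsdef⟩ : ∃ X : Finset ℕ, X = D.verts ∩ S := ⟨_, rfl⟩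
    have hBs_mem : ∀ x, x ∈ Bs ↔ x ∈ D.verts \ S ∧ (D.delete S).Reach u x := by
      intro x; rw [hBsdef, Finset.mem_filter]
    have hAs_mem : ∀ x, x ∈ As ↔ x ∈ D.verts \ S ∧ x ∉ Bs := by
      intro x; rw [hAsdef, Finset.mem_sdiff]
    have hSs_mem : ∀ x, x ∈ Ss ↔ x ∈ D.verts ∧ x ∈ S := by
      intro x; rw [hSsdef, Finset.mem_inter]
    have hBsub : Bs ⊆ D.verts \ S := fun x hx => ((hBs_mem x).mp hx).1
    have hAsub : As ⊆ D.verts \ S := fun x hx => ((hAs_mem x).mp hx).1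
    have huB : u ∈ Bs := (hBs_mem u).mpr ⟨hu', Relation.ReflTransGen.refl⟩
    have hvA : v ∈ As := by
      refine (hAs_mem v).mpr ⟨hv', ?_⟩
      intro hvB
      exact huv ((hBs_mem v).mp hvB).2
    have hnoBA : ∀ e ∈ D.arcs, e.1 ∈ Bs → e.2 ∉ As := by
      intro e he h1 h2
      have h1' := (hBs_mem e.1).mp h1
      have h2' := (hAs_mem e.2).mp h2
      have e1S : e.1 ∉ S := (Finset.mem_sdiff.mp h1'.1).2
      have e2S : e.2 ∉ S := (Finset.mem_sdiff.mp h2'.1).2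
      have hedel : ((e.1, e.2) : ℕ × ℕ) ∈ (D.delete S).arcs := by
        show (e.1, e.2) ∈ D.arcs.filter _
        rw [Finset.mem_filter]
        constructor
        · rw [Prod.mk.eta]; exact he
        · exact ⟨e1S, e2S⟩
      have hreach : (D.delete S).Reach u e.2 := Relation.ReflTransGen.tail h1'.2 hedel
      exact h2'.2 ((hBs_mem e.2).mpr ⟨h2'.1, hreach⟩)
    -- partition facts
    have hpart : ∀ w ∈ D.verts, w ∈ As ∨ w ∈ Bs ∨ w ∈ Ss := by
      intro w hw
      by_cases hwS : w ∈ S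
      · exact Or.inr (Or.inr ((hSs_mem w).mpr ⟨hw, hwS⟩))
      · by_cases hwB : w ∈ Bs
        · exact Or.inr (Or.inl hwB)
        · exact Or.inl ((hAs_mem w).mpr ⟨Finset.mem_sdiff.mpr ⟨hw, hwS⟩, hwB⟩)
    have hdisjAB : Disjoint As Bs := by
      rw [Finset.disjoint_left]
      intro x hxA hxB
      exact ((hAs_mem x).mp hxA).2 hxB
    have hdisjSA : Disjoint As Ss := by
      rw [Finset.disjoint_left]
      intro x hxA hxS
      exact (Finset.mem_sdiff.mp (hAsub hxA)).2 ((hSs_mem x).mp hxS).2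
    have hdisjSB : Disjoint Bs Ss := by
      rw [Finset.disjoint_left]
      intro x hxB hxS
      exact (Finset.mem_sdiff.mp (hBsub hxB)).2 ((hSs_mem x).mp hxS).2
    have hAV : As ⊆ D.verts := fun x hx => (Finset.mem_sdiff.mp (hAsub hx)).1
    have hBV : Bs ⊆ D.verts := fun x hx => (Finset.mem_sdiff.mp (hBsub hx)).1
    have hSV : Ss ⊆ D.verts := fun x hx => ((hSs_mem x).mp hx).1
    obtain ⟨a, hadef⟩ : ∃ c : ℕ, c = As.card := ⟨_, rfl⟩
    obtain ⟨b, hbdef⟩ : ∃ c : ℕ, c = Bs.card := ⟨_, rfl⟩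
    obtain ⟨s0, hs0def⟩ : ∃ c : ℕ, c = Ss.card := ⟨_, rfl⟩
    have hsum : a + b + s0 = m := by
      have hD2 : (As ∪ Bs) ∪ Ss = D.verts := by
        ext x
        simp only [Finset.mem_union, hAs_mem, hBs_mem, hSs_mem, Finset.mem_sdiff]
        constructor
        · rintro ((⟨⟨h1, _⟩, _⟩ | ⟨⟨h1, _⟩, _⟩) | ⟨h1, _⟩) <;> exact h1
        · intro hx
          by_cases hxS : x ∈ S
          · exact Or.inr ⟨hx, hxS⟩
          · by_cases hxB : (D.delete S).Reach u x
            · exact Or.inl (Or.inr ⟨⟨hx, hxS⟩, hxB⟩)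
            · refine Or.inl (Or.inl ⟨⟨hx, hxS⟩, ?_⟩)
              intro hB
              exact hxB hB.2
      have hd1 : Disjoint (As ∪ Bs) Ss := by
        rw [Finset.disjoint_union_left]
        exact ⟨hdisjSA, hdisjSB⟩
      have hcu := Finset.card_union_of_disjoint hd1
      rw [Finset.card_union_of_disjoint hdisjAB, hD2, hDcard] at hcu
      omega
    have ha1 : 1 ≤ a := by rw [hadef]; exact Finset.card_pos.mpr ⟨v, hvA⟩
    have hb1 : 1 ≤ b := by rw [hbdef]; exact Finset.card_pos.mpr ⟨u, huB⟩
    have hs0k : s0 < k := by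
      rw [hs0def, hSsdef]
      exact lt_of_le_of_lt (Finset.card_le_card Finset.inter_subset_right) hScard
    -- induction helper
    have hIH : ∀ T : Finset ℕ, T ⊆ D.verts → T.card < m →
        ((D.induce T).arcs.card : ℚ) ≤ Fq k T.card := by
      intro T hT hTm
      exact ih T.card hTm (D.induce T) (induce_card hT)
        (fun H hH => hfree H (sub_trans hH (induce_sub D T)))
    have hcASS : (As ∪ Ss).card = a + s0 := by
      rw [Finset.card_union_of_disjoint hdisjSA, hadef, hs0def]
    have hcBSS : (Bs ∪ Ss).card = b + s0 := by
      rw [Finset.card_union_of_disjoint hdisjSB, hbdef, hs0def]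
    rcases le_total a b with hab | hab
    · by_cases h3 : 3 * k ≤ a + s0 + 3
      · -- option o3
        have hcov := card_cover D (As ∪ Ss) (Bs ∪ Ss) (As ×ˢ Bs) ∅ (by
          intro e he
          have hBA := hnoBA e he
          have px := hpart e.1 (D.arcs_mem e he).1
          have py := hpart e.2 (D.arcs_mem e he).2
          simp only [Finset.mem_union, Finset.mem_product, Finset.notMem_empty]
          rcases px with p | p | p <;> rcases py with q | q | q
          · exact Or.inl ⟨Or.inl p, Or.inl q⟩
          · exact Or.inr (Or.inr (Or.inl ⟨p, q⟩))
          · exact Or.inl ⟨Or.inl p, Or.inr q⟩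
          · exact absurd q (hBA p)
          · exact Or.inr (Or.inl ⟨Or.inl p, Or.inl q⟩)
          · exact Or.inr (Or.inl ⟨Or.inl p, Or.inr q⟩)
          · exact Or.inl ⟨Or.inr p, Or.inl q⟩
          · exact Or.inr (Or.inl ⟨Or.inr p, Or.inl q⟩)
          · exact Or.inl ⟨Or.inr p, Or.inr q⟩)
        have hI1 : ((D.induce (As ∪ Ss)).arcs.card : ℚ) ≤ Fq k (a + s0) := by
          have := hIH (As ∪ Ss) (Finset.union_subset hAV hSV) (by omega)
          rwa [hcASS] at this
        have hI2 : ((D.induce (Bs ∪ Ss)).arcs.card : ℚ) ≤ Fq k (b + s0) := by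
          have := hIH (Bs ∪ Ss) (Finset.union_subset hBV hSV) (by omega)
          rwa [hcBSS] at this
        have hsplit := split_o3 k a b s0 hk ha1 hb1 hs0k h3 (by omega)
        have hcovQ : (D.arcs.card : ℚ) ≤ (D.induce (As ∪ Ss)).arcs.card
            + (D.induce (Bs ∪ Ss)).arcs.card + (a : ℚ) * b := by
          have : ((As ×ˢ Bs).card + (∅ : Finset (ℕ × ℕ)).card) = a * b := by
            rw [Finset.card_product, Finset.card_empty, hadef, hbdef]
            omega
          have h5 : (D.arcs.card : ℕ) ≤ (D.induce (As ∪ Ss)).arcs.card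
              + (D.induce (Bs ∪ Ss)).arcs.card + a * b := by
            rw [← this]; exact hcov
          exact_mod_cast h5
        rw [← hsum]
        linarith
      · -- option o2 (leave As alone)
        have hcov := card_cover D As (Bs ∪ Ss) (As ×ˢ (Bs ∪ Ss)) (Ss ×ˢ As) (by
          intro e he
          have hBA := hnoBA e he
          have px := hpart e.1 (D.arcs_mem e he).1
          have py := hpart e.2 (D.arcs_mem e he).2
          simp only [Finset.mem_union, Finset.mem_product]
          rcases px with p | p | p <;> rcases py with q | q | q
          · exact Or.inl ⟨p, q⟩
          · exact Or.inr (Or.inr (Or.inl ⟨p, Or.inl q⟩))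
          · exact Or.inr (Or.inr (Or.inl ⟨p, Or.inr q⟩))
          · exact absurd q (hBA p)
          · exact Or.inr (Or.inl ⟨Or.inl p, Or.inl q⟩)
          · exact Or.inr (Or.inl ⟨Or.inl p, Or.inr q⟩)
          · exact Or.inr (Or.inr (Or.inr ⟨p, q⟩))
          · exact Or.inr (Or.inl ⟨Or.inr p, Or.inl q⟩)
          · exact Or.inr (Or.inl ⟨Or.inr p, Or.inr q⟩))
        have hI1 : ((D.induce As).arcs.card : ℚ) ≤ Fq k a := by
          have := hIH As hAV (by omega)
          rwa [← hadef] at this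
        have hI2 : ((D.induce (Bs ∪ Ss)).arcs.card : ℚ) ≤ Fq k (b + s0) := by
          have := hIH (Bs ∪ Ss) (Finset.union_subset hBV hSV) (by omega)
          rwa [hcBSS] at this
        have hsplit := split_o2 k a b s0 hk ha1 hab hs0k (by omega) (by omega)
        have hcovQ : (D.arcs.card : ℚ) ≤ (D.induce As).arcs.card
            + (D.induce (Bs ∪ Ss)).arcs.card + (2 * (a : ℚ) * s0 + (a : ℚ) * b) := by
          have h6 : ((As ×ˢ (Bs ∪ Ss)).card + (Ss ×ˢ As).card) = a * (b + s0) + s0 * a := by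
            rw [Finset.card_product, Finset.card_product, hcBSS, hadef, hs0def]
          have h5 : (D.arcs.card : ℕ) ≤ (D.induce As).arcs.card
              + (D.induce (Bs ∪ Ss)).arcs.card + (a * (b + s0) + s0 * a) := by
            rw [← h6]; exact hcov
          have h7 : (D.arcs.card : ℚ) ≤ (D.induce As).arcs.card
              + (D.induce (Bs ∪ Ss)).arcs.card + ((a : ℚ) * ((b : ℚ) + s0) + (s0 : ℚ) * a) := by
            exact_mod_cast h5
          linarith [h7]
        rw [← hsum]
        linarith
    · by_cases h3 : 3 * k ≤ b + s0 + 3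
      · -- option o3 (mirror)
        have hcov := card_cover D (As ∪ Ss) (Bs ∪ Ss) (As ×ˢ Bs) ∅ (by
          intro e he
          have hBA := hnoBA e he
          have px := hpart e.1 (D.arcs_mem e he).1
          have py := hpart e.2 (D.arcs_mem e he).2
          simp only [Finset.mem_union, Finset.mem_product, Finset.notMem_empty]
          rcases px with p | p | p <;> rcases py with q | q | q
          · exact Or.inl ⟨Or.inl p, Or.inl q⟩
          · exact Or.inr (Or.inr (Or.inl ⟨p, q⟩))
          · exact Or.inl ⟨Or.inl p, Or.inr q⟩
          · exact absurd q (hBA p)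
          · exact Or.inr (Or.inl ⟨Or.inl p, Or.inl q⟩)
          · exact Or.inr (Or.inl ⟨Or.inl p, Or.inr q⟩)
          · exact Or.inl ⟨Or.inr p, Or.inl q⟩
          · exact Or.inr (Or.inl ⟨Or.inr p, Or.inl q⟩)
          · exact Or.inl ⟨Or.inr p, Or.inr q⟩)
        have hI1 : ((D.induce (As ∪ Ss)).arcs.card : ℚ) ≤ Fq k (a + s0) := by
          have := hIH (As ∪ Ss) (Finset.union_subset hAV hSV) (by omega)
          rwa [hcASS] at this
        have hI2 : ((D.induce (Bs ∪ Ss)).arcs.card : ℚ) ≤ Fq k (b + s0) := by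
          have := hIH (Bs ∪ Ss) (Finset.union_subset hBV hSV) (by omega)
          rwa [hcBSS] at this
        have hsplit := split_o3 k a b s0 hk ha1 hb1 hs0k (by omega) h3
        have hcovQ : (D.arcs.card : ℚ) ≤ (D.induce (As ∪ Ss)).arcs.card
            + (D.induce (Bs ∪ Ss)).arcs.card + (a : ℚ) * b := by
          have : ((As ×ˢ Bs).card + (∅ : Finset (ℕ × ℕ)).card) = a * b := by
            rw [Finset.card_product, Finset.card_empty, hadef, hbdef]
            omega
          have h5 : (D.arcs.card : ℕ) ≤ (D.induce (As ∪ Ss)).arcs.card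
              + (D.induce (Bs ∪ Ss)).arcs.card + a * b := by
            rw [← this]; exact hcov
          exact_mod_cast h5
        rw [← hsum]
        linarith
      · -- option o2 mirror (leave Bs alone)
        have hcov := card_cover D Bs (As ∪ Ss) (As ×ˢ Bs) (Bs ×ˢ Ss ∪ Ss ×ˢ Bs) (by
          intro e he
          have hBA := hnoBA e he
          have px := hpart e.1 (D.arcs_mem e he).1
          have py := hpart e.2 (D.arcs_mem e he).2
          simp only [Finset.mem_union, Finset.mem_product]
          rcases px with p | p | p <;> rcases py with q | q | q
          · exact Or.inr (Or.inl ⟨Or.inl p, Or.inl q⟩)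
          · exact Or.inr (Or.inr (Or.inl ⟨p, q⟩))
          · exact Or.inr (Or.inl ⟨Or.inl p, Or.inr q⟩)
          · exact absurd q (hBA p)
          · exact Or.inl ⟨p, q⟩
          · exact Or.inr (Or.inr (Or.inr (Or.inl ⟨p, q⟩)))
          · exact Or.inr (Or.inl ⟨Or.inr p, Or.inl q⟩)
          · exact Or.inr (Or.inr (Or.inr (Or.inr ⟨p, q⟩)))
          · exact Or.inr (Or.inl ⟨Or.inr p, Or.inr q⟩))
        have hI1 : ((D.induce Bs).arcs.card : ℚ) ≤ Fq k b := by
          have := hIH Bs hBV (by omega)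
          rwa [← hbdef] at this
        have hI2 : ((D.induce (As ∪ Ss)).arcs.card : ℚ) ≤ Fq k (a + s0) := by
          have := hIH (As ∪ Ss) (Finset.union_subset hAV hSV) (by omega)
          rwa [hcASS] at this
        have hsplit := split_o2 k b a s0 hk hb1 hab hs0k (by omega) (by omega)
        have heq : b + a + s0 = a + b + s0 := by omega
        rw [heq] at hsplit
        have hcovQ : (D.arcs.card : ℚ) ≤ (D.induce Bs).arcs.card
            + (D.induce (As ∪ Ss)).arcs.card + ((a : ℚ) * b + 2 * (b : ℚ) * s0) := by
          have h6 : ((As ×ˢ Bs).card + (Bs ×ˢ Ss ∪ Ss ×ˢ Bs).card) ≤ a * b + (b * s0 + s0 * b) := by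
            have hcu := Finset.card_union_le (Bs ×ˢ Ss) (Ss ×ˢ Bs)
            simp only [Finset.card_product] at hcu ⊢
            rw [hadef, hbdef, hs0def]
            omega
          have h5 : (D.arcs.card : ℕ) ≤ (D.induce Bs).arcs.card
              + (D.induce (As ∪ Ss)).arcs.card + (a * b + (b * s0 + s0 * b)) := by
            omega
          have h7 : (D.arcs.card : ℚ) ≤ (D.induce Bs).arcs.card
              + (D.induce (As ∪ Ss)).arcs.card
              + ((a : ℚ) * b + ((b : ℚ) * s0 + (s0 : ℚ) * b)) := by
            exact_mod_cast h5
          linarith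
        rw [← hsum]
        linarith

end Stmt15Aux
/-- For `n ≥ 3(k-1)`, every `n`-vertex digraph with no `k`-strongly connected
subdigraph has at most `C(n-k+1, 2) + (17/6)(k-1)(n-k+1)` arcs; in particular
every `n`-vertex `𝒟ₖ`-saturated digraph satisfies this bound, so
`ex(n, 𝒟ₖ)` is at most this value. -/
theorem stmt15 (k n : ℕ) (hk : 2 ≤ k) (hn : 3 * (k - 1) ≤ n) :
    (∀ D : Dgraph, D.verts.card = n →
      (∀ H : Dgraph, H.IsSubdigraph D → ¬ H.KStrong k) →
      (D.arcs.card : ℚ) ≤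
        ((n - k + 1).choose 2 : ℚ) + 17 / 6 * ((k : ℚ) - 1) * ((n : ℚ) - k + 1)) ∧
    (∀ D : Dgraph, D.verts.card = n → D.DSaturated k →
      (D.arcs.card : ℚ) ≤
        ((n - k + 1).choose 2 : ℚ) + 17 / 6 * ((k : ℚ) - 1) * ((n : ℚ) - k + 1)) := by
  have hkn : k ≤ n := by omega
  have key : ∀ D : Dgraph, D.verts.card = n →
      (∀ H : Dgraph, H.IsSubdigraph D → ¬ H.KStrong k) →
      (D.arcs.card : ℚ) ≤
        ((n - k + 1).choose 2 : ℚ) + 17 / 6 * ((k : ℚ) - 1) * ((n : ℚ) - k + 1) := by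
    intro D hc hf
    have hb := Stmt15Aux.main_bound k hk n D hc hf
    rw [Stmt15Aux.Fq_top (by omega) (by omega)] at hb
    have hcast : ((n - k + 1).choose 2 : ℚ)
        = ((n : ℚ) - k + 1) * (((n : ℚ) - k + 1) - 1) / 2 := by
      rw [Nat.cast_choose_two]
      congr 1
      · congr 1 <;> push_cast [Nat.cast_sub hkn] <;> ring
    rw [hcast]
    calc (D.arcs.card : ℚ)
        ≤ ((n : ℚ) - (k : ℚ) + 1) * ((n : ℚ) - (k : ℚ)) / 2
          + 17 / 6 * ((k : ℚ) - 1) * ((n : ℚ) - (k : ℚ) + 1) := hb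
      _ = ((n : ℚ) - k + 1) * (((n : ℚ) - k + 1) - 1) / 2
          + 17 / 6 * ((k : ℚ) - 1) * ((n : ℚ) - k + 1) := by ring
  exact ⟨key, fun D hc hsat => key D hc hsat.1⟩
end

section
/- Let k ≥ 2 and let D be a directed (k−1)-tree. Then D contains no k-strongly connected subdigraph. -/
open Dgraph

/-- In `D.extend v K true`, every arc into `v` comes from `K`. -/
lemma extend_arc_into (D : Dgraph) (v : ℕ) (hv : v ∉ D.verts) (K : Finset ℕ)
    (x : ℕ) (hx : (x, v) ∈ (D.extend v K true).arcs) : x ∈ K := by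
  simp only [extend, Finset.mem_union, if_true] at hx
  rcases hx with ((h | h) | h) | h
  · exact absurd (D.arcs_mem _ h).2 hv
  · obtain ⟨w, hw, he⟩ := Finset.mem_image.mp h
    have := (Finset.mem_inter.mp (Finset.mem_filter.mp hw).1).1
    rw [show w = x from congrArg Prod.fst he] at this
    exact this
  · obtain ⟨w, hw, he⟩ := Finset.mem_image.mp h
    exact absurd (congrArg Prod.snd he) (Finset.mem_filter.mp hw).2
  · obtain ⟨w, hw, he⟩ := Finset.mem_image.mp h
    exact absurd (congrArg Prod.snd he) (Finset.mem_filter.mp hw).2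

/-- In `D.extend v K false`, every arc out of `v` goes into `K`. -/
lemma extend_arc_out (D : Dgraph) (v : ℕ) (hv : v ∉ D.verts) (K : Finset ℕ)
    (x : ℕ) (hx : (v, x) ∈ (D.extend v K false).arcs) : x ∈ K := by
  simp only [extend, Finset.mem_union, Bool.false_eq_true, if_false] at hx
  rcases hx with ((h | h) | h) | h
  · exact absurd (D.arcs_mem _ h).1 hv
  · obtain ⟨w, hw, he⟩ := Finset.mem_image.mp h
    exact absurd (congrArg Prod.fst he) (Finset.mem_filter.mp hw).2
  · obtain ⟨w, hw, he⟩ := Finset.mem_image.mp h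
    have := (Finset.mem_inter.mp (Finset.mem_filter.mp hw).1).1
    rw [show w = x from congrArg Prod.snd he] at this
    exact this
  · obtain ⟨w, hw, he⟩ := Finset.mem_image.mp h
    exact absurd (congrArg Prod.fst he) (Finset.mem_filter.mp hw).2

/-- A directed `(k-1)`-tree contains no `k`-strongly connected subdigraph. -/
theorem stmt18 (k : ℕ) (hk : 2 ≤ k) (D : Dgraph)
    (hD : Dgraph.IsDTree (k - 1) D) :
    ∀ H : Dgraph, H.IsSubdigraph D → ¬ H.KStrong k := by
  induction hD with
  | base S hS =>
    intro H hH hKs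
    have h1 : H.verts.card ≤ S.card := Finset.card_le_card hH.1
    have h2 := hKs.1
    omega
  | grow D' hD' v hv K hK hKcard hKcomplete out ih =>
    intro H hH hKs
    by_cases hvH : v ∈ H.verts
    · -- K separates v from the rest of H
      have hScard : K.card < k := by omega
      have hsc := hKs.2 K hScard
      have hvK : v ∉ K := fun h => hv (hK h)
      have hvdel : v ∈ (H.delete K).verts := by
        simp only [delete, Finset.mem_sdiff]
        exact ⟨hvH, hvK⟩
      have hcard2 : 1 < (H.delete K).verts.card := by
        have h1 := hKs.1
        have h2 := Finset.card_le_card_sdiff_add_card (s := H.verts) (t := K)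
        simp only [delete]
        omega
      obtain ⟨u, hu, hune⟩ := Finset.exists_mem_ne hcard2 v
      cases out with
      | true =>
        -- no arc into v survives
        have hr := hsc u hu v hvdel
        rcases hr.cases_tail with h | ⟨b, _, hb⟩
        · exact hune h.symm
        · have hb' := Finset.mem_filter.mp hb
          have hKarc : (b, v) ∈ (D'.extend v K true).arcs := hH.2 hb'.1
          exact hb'.2.1 (extend_arc_into D' v hv K b hKarc)
      | false =>
        -- no arc out of v survives
        have hr := hsc v hvdel u hu
        rcases hr.cases_head with h | ⟨b, hb, _⟩
        · exact hune h.symm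
        · have hb' := Finset.mem_filter.mp hb
          have hKarc : (v, b) ∈ (D'.extend v K false).arcs := hH.2 hb'.1
          exact hb'.2.2 (extend_arc_out D' v hv K b hKarc)
    · -- H avoids v, so H is a subdigraph of D'
      refine ih H ⟨?_, ?_⟩ hKs
      · intro x hx
        have := hH.1 hx
        simp only [extend, Finset.mem_insert] at this
        rcases this with rfl | h
        · exact absurd hx hvH
        · exact h
      · intro e he
        have hm := H.arcs_mem e he
        have h1 : e.1 ≠ v := fun h => hvH (h ▸ hm.1)
        have h2 : e.2 ≠ v := fun h => hvH (h ▸ hm.2)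
        have := hH.2 he
        simp only [extend, Finset.mem_union] at this
        rcases this with ((h | h) | h) | h
        · exact h
        · obtain ⟨w, _, hw⟩ := Finset.mem_image.mp h
          exact absurd (congrArg Prod.snd hw).symm h2
        · obtain ⟨w, _, hw⟩ := Finset.mem_image.mp h
          exact absurd (congrArg Prod.fst hw).symm h1
        · cases out with
          | true =>
            simp only [if_true] at h
            obtain ⟨w, _, hw⟩ := Finset.mem_image.mp h
            exact absurd (congrArg Prod.fst hw).symm h1
          | false =>
            simp only [Bool.false_eq_true, if_false] at h
            obtain ⟨w, _, hw⟩ := Finset.mem_image.mp h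
            exact absurd (congrArg Prod.snd hw).symm h2
end
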